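/- Let H be a complex Hilbert space, Π an orthogonal projection on H, and χ, η bounded self-adjoint operators on H with χ² + η² ≤ 1 in the Loewner order. Define X = ΠχΠ + (1−Π)χ(1−Π) and Y = ΠηΠ + (1−Π)η(1−Π). Then X Π X + Y Π Y ≤ Π and X (1−Π) X + Y (1−Π) Y ≤ 1 − Π in the Loewner order. -/

import Mathlib

/-!
Since `X Π = Π X = Π χ Π`, we get `X Π X = (χ Π)⋆ Π (χ Π) ≤ (χ Π)⋆ (χ Π) = Π χ² Π`, and likewise for
`Y`; adding, `X Π X + Y Π Y ≤ Π (χ² + η²) Π ≤ Π`. This only uses `0 ≤ Π ≤ 1` and monotonicity of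
conjugation, so it holds in any star-ordered ring. The second inequality is the first one for the
projection `1 - Π`, which induces the same localization.
-/

open scoped ComplexOrder

/-- The Loewner order on bounded operators on a complex Hilbert space:
`A ≤ B` iff `⟨x, (B - A) x⟩ ≥ 0` for all `x`. -/
def LoewnerLE {H : Type*} [NormedAddCommGroup H] [InnerProductSpace ℂ H]
    (A B : H →L[ℂ] H) : Prop :=
  ∀ x : H, (0 : ℂ) ≤ (inner ℂ x ((B - A) x) : ℂ)

section Localization

variable {R : Type*} [Ring R] {p : R}

def localization (p a : R) : R := p * a * p + (1 - p) * a * (1 - p)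

lemma localization_one_sub (p a : R) : localization (1 - p) a = localization p a := by
  rw [localization, localization, sub_sub_cancel, add_comm]

lemma IsIdempotentElem.localization_mul (hp : IsIdempotentElem p) (a : R) :
    localization p a * p = p * a * p := by
  simp only [localization, add_mul, mul_assoc, hp.one_sub_mul_self, mul_zero, add_zero, hp.eq]

lemma IsIdempotentElem.mul_localization (hp : IsIdempotentElem p) (a : R) :
    p * localization p a = p * a * p := by
  simp only [localization, mul_add, ← mul_assoc, hp.mul_one_sub_self, zero_mul, add_zero, hp.eq]

variable [PartialOrder R] [StarRing R] [StarOrderedRing R]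

lemma IsStarProjection.localization_mul_mul_localization_le (hp : IsStarProjection p) {a : R}
    (ha : IsSelfAdjoint a) : localization p a * p * localization p a ≤ p * (a * a) * p := by
  have hap : star (a * p) = p * a := by rw [star_mul, hp.isSelfAdjoint.star_eq, ha.star_eq]
  have hpp : p * p = p := hp.isIdempotentElem.eq
  calc localization p a * p * localization p a
      = localization p a * p * (p * localization p a) := by rw [← mul_assoc, mul_assoc _ p p, hpp]
    _ = p * a * (p * p) * a * p := by
      rw [hp.isIdempotentElem.localization_mul, hp.isIdempotentElem.mul_localization]; noncomm_ring
    _ = star (a * p) * p * (a * p) := by rw [hpp, hap]; noncomm_ring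
    _ ≤ star (a * p) * 1 * (a * p) := star_left_conjugate_le_conjugate hp.le_one _
    _ = p * (a * a) * p := by rw [hap]; noncomm_ring

lemma IsStarProjection.localization_conj_add_le (hp : IsStarProjection p) {a b : R}
    (ha : IsSelfAdjoint a) (hb : IsSelfAdjoint b) (hab : a * a + b * b ≤ 1) :
    localization p a * p * localization p a + localization p b * p * localization p b ≤ p :=
  calc _ ≤ p * (a * a) * p + p * (b * b) * p :=
        add_le_add (hp.localization_mul_mul_localization_le ha)
          (hp.localization_mul_mul_localization_le hb)
    _ = p * (a * a + b * b) * p := by noncomm_ring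
    _ ≤ p * 1 * p := hp.isSelfAdjoint.conjugate_le_conjugate hab
    _ = p := by rw [mul_one, hp.isIdempotentElem.eq]

end Localization

lemma loewnerLE_iff_le {H : Type*} [NormedAddCommGroup H] [InnerProductSpace ℂ H]
    [CompleteSpace H] {A B : H →L[ℂ] H} : LoewnerLE A B ↔ A ≤ B := by
  refine ⟨fun h => ?_, fun h => h.inner_nonneg_right⟩
  rw [ContinuousLinearMap.le_def, ContinuousLinearMap.isPositive_iff_complex]
  intro x
  have hx := star_nonneg_iff.mpr (h x)
  rw [Complex.star_def, inner_conj_symm, Complex.nonneg_iff] at hx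
  exact ⟨Complex.ext rfl hx.2, hx.1⟩

theorem stmt1 {H : Type*} [NormedAddCommGroup H] [InnerProductSpace ℂ H] [CompleteSpace H]
    (P : H →L[ℂ] H) (hP : IsSelfAdjoint P) (hP2 : P * P = P)
    (χ η : H →L[ℂ] H) (hχ : IsSelfAdjoint χ) (hη : IsSelfAdjoint η)
    (hχη : LoewnerLE (χ * χ + η * η) 1)
    (X Y : H →L[ℂ] H)
    (hX : X = P * χ * P + (1 - P) * χ * (1 - P))
    (hY : Y = P * η * P + (1 - P) * η * (1 - P)) :
    LoewnerLE (X * P * X + Y * P * Y) P ∧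
      LoewnerLE (X * (1 - P) * X + Y * (1 - P) * Y) (1 - P) := by
  have hp : IsStarProjection P := ⟨hP2, hP⟩
  rw [loewnerLE_iff_le] at hχη
  change X = localization P χ at hX
  change Y = localization P η at hY
  rw [loewnerLE_iff_le, loewnerLE_iff_le, hX, hY]
  refine ⟨hp.localization_conj_add_le hχ hη hχη, ?_⟩
  simpa only [localization_one_sub] using hp.one_sub.localization_conj_add_le hχ hη hχη
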